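/- arXiv:2103.05417 — 4 statements merged into one kernel-verified Lean document; each statement's English description precedes it below -/
import Mathlib

section
/- Each color class of a 2-distinguishing coloring of a graph G is a determining set for G; consequently, if G is 2-distinguishable then det(G) ≤ ρ(G). -/
open SimpleGraph

/-- The generalized Mycielskian `μ_t(G)`: vertices are `some (s, i)` for levels
`0 ≤ s ≤ t` (level `0` being the original vertices) plus a root `none`. -/
def Mycielskian {V : Type*} (G : SimpleGraph V) (t : ℕ) :
    SimpleGraph (Option (Fin (t + 1) × V)) where
  Adj x y :=
    match x, y with
    | none, none => False
    | none, some (s, _) => s.val = t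
    | some (s, _), none => s.val = t
    | some (s, i), some (r, j) =>
        G.Adj i j ∧ ((s.val = 0 ∧ r.val = 0) ∨ s.val + 1 = r.val ∨ r.val + 1 = s.val)
  symm := by
    constructor
    rintro (_ | ⟨s, i⟩) (_ | ⟨r, j⟩) h
    · exact h
    · exact h
    · exact h
    · exact ⟨h.1.symm, by tauto⟩
  loopless := by
    constructor
    rintro (_ | ⟨s, i⟩) h
    · exact h
    · exact G.loopless.irrefl i h.1

/-- `S` is a determining set for `G`: the only automorphism fixing `S` pointwise
is the identity. -/
def IsDetermining {V : Type*} (G : SimpleGraph V) (S : Set V) : Prop :=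
  ∀ φ : G ≃g G, (∀ v ∈ S, φ v = v) → ∀ v, φ v = v

/-- The determining number of `G`. -/
noncomputable def detNum {V : Type*} (G : SimpleGraph V) : ℕ :=
  sInf {n | ∃ S : Finset V, S.card = n ∧ IsDetermining G ↑S}

/-- A coloring is distinguishing if no nontrivial automorphism preserves all
color classes. -/
def IsDistinguishing {V : Type*} (G : SimpleGraph V) {C : Type*} (c : V → C) : Prop :=
  ∀ φ : G ≃g G, (∀ v, c (φ v) = c v) → ∀ v, φ v = v

/-- The distinguishing number of `G`. -/
noncomputable def distNum {V : Type*} (G : SimpleGraph V) : ℕ :=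
  sInf {d | ∃ c : V → Fin d, IsDistinguishing G c}

/-- The cost of 2-distinguishing: the minimum size of a color class over all
2-distinguishing colorings. -/
noncomputable def cost2 {V : Type*} (G : SimpleGraph V) [Fintype V] : ℕ :=
  sInf {n | ∃ c : V → Bool, IsDistinguishing G c ∧
    n = (Finset.univ.filter fun v => c v = true).card}

/-- The twin equivalence relation: equal open neighborhoods. -/
def twinSetoid {V : Type*} (G : SimpleGraph V) : Setoid V where
  r x y := G.neighborSet x = G.neighborSet y
  iseqv := ⟨fun _ => rfl, Eq.symm, Eq.trans⟩

/-- The twin quotient graph `G̃`. -/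
def twinQuotient {V : Type*} (G : SimpleGraph V) :
    SimpleGraph (Quotient (twinSetoid G)) where
  Adj a b := ∃ p q : V, Quotient.mk (twinSetoid G) p = a ∧
    Quotient.mk (twinSetoid G) q = b ∧ G.Adj p q
  symm := by constructor; rintro a b ⟨p, q, hp, hq, h⟩; exact ⟨q, p, hq, hp, h.symm⟩
  loopless := by
    constructor
    rintro a ⟨p, q, rfl, hq, h⟩
    have htw : G.neighborSet q = G.neighborSet p := Quotient.exact hq
    have hmem : q ∈ G.neighborSet p := h
    rw [← htw] at hmem
    exact G.loopless.irrefl q hmem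

/-- A twin cover: contains at least one of every pair of distinct twins. -/
def IsTwinCover {V : Type*} (G : SimpleGraph V) (T : Set V) : Prop :=
  ∀ x y : V, x ≠ y → G.neighborSet x = G.neighborSet y → x ∈ T ∨ y ∈ T

/-- A minimum twin cover. -/
def IsMinTwinCover {V : Type*} (G : SimpleGraph V) (T : Set V) : Prop :=
  IsTwinCover G T ∧ ∀ T' : Set V, IsTwinCover G T' → T.ncard ≤ T'.ncard

/-- Attach `ℓ` pendant vertices to the vertex `w` of `G`. -/
def attachPendants {V : Type*} (G : SimpleGraph V) (w : V) (ℓ : ℕ) :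
    SimpleGraph (V ⊕ Fin ℓ) where
  Adj x y :=
    match x, y with
    | Sum.inl a, Sum.inl b => G.Adj a b
    | Sum.inl a, Sum.inr _ => a = w
    | Sum.inr _, Sum.inl b => b = w
    | Sum.inr _, Sum.inr _ => False
  symm := by constructor; rintro (a | a) (b | b) h <;> simp_all <;> exact h.symm
  loopless := by constructor; rintro (a | a) h <;> simp_all

theorem Equiv.apply_mem_iff_of_forall_mem_fixed {V : Type*} (φ : V ≃ V) {S : Set V}
    (hS : ∀ v ∈ S, φ v = v) (v : V) : φ v ∈ S ↔ v ∈ S := by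
  refine ⟨fun h => ?_, fun h => by rwa [hS v h]⟩
  rwa [← φ.injective (hS (φ v) h)]

section

variable {V : Type*} {G : SimpleGraph V}

/-- Since `φ` fixes the class of `b` pointwise, it maps the other class onto itself, so with
only two colours it preserves the colouring. -/
theorem IsDistinguishing.isDetermining_colorClass {c : V → Bool} (hc : IsDistinguishing G c)
    (b : Bool) : IsDetermining G {v | c v = b} := by
  intro φ hφ
  refine hc φ fun v => ?_
  have hclass : c (φ v) = b ↔ c v = b := φ.toEquiv.apply_mem_iff_of_forall_mem_fixed hφ v
  cases b <;> simpa using hclass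

theorem detNum_le_card {S : Finset V} (hS : IsDetermining G S) : detNum G ≤ S.card :=
  Nat.sInf_le ⟨S, rfl, hS⟩

theorem exists_isDistinguishing_card_eq_cost2 [Fintype V]
    (h : ∃ c : V → Bool, IsDistinguishing G c) :
    ∃ c : V → Bool, IsDistinguishing G c ∧
      (Finset.univ.filter fun v => c v = true).card = cost2 G := by
  obtain ⟨c₀, hc₀⟩ := h
  obtain ⟨c, hc, hcard⟩ := Nat.sInf_mem (s := {n | ∃ c : V → Bool, IsDistinguishing G c ∧
    n = (Finset.univ.filter fun v => c v = true).card}) ⟨_, c₀, hc₀, rfl⟩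
  exact ⟨c, hc, hcard.symm⟩

end

/-- each color class of a 2-distinguishing coloring is a
determining set; hence if `G` is 2-distinguishable then `det(G) ≤ ρ(G)`. -/
theorem det_le_cost {V : Type*} [Fintype V] (G : SimpleGraph V) :
    (∀ c : V → Bool, IsDistinguishing G c →
      ∀ b : Bool, IsDetermining G {v | c v = b}) ∧
    ((∃ c : V → Bool, IsDistinguishing G c) → detNum G ≤ cost2 G) := by
  refine ⟨fun c hc => hc.isDetermining_colorClass, fun h => ?_⟩
  obtain ⟨c, hc, hcard⟩ := exists_isDistinguishing_card_eq_cost2 h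
  rw [← hcard]
  apply detNum_le_card
  simpa using hc.isDetermining_colorClass true
end

section
/- If original vertices v_i and v_j are twins in a graph G, then for every level 0 ≤ s ≤ t, the vertices u_i^s and u_j^s are twins in the generalized Mycielskian μ_t(G). Conversely, if u_i^s and u_j^s are twins in μ_t(G) for some 0 ≤ s ≤ t, then v_i and v_j are twins in G. -/
open SimpleGraph

namespace Mycielskian

variable {V : Type*} {G : SimpleGraph V} {t : ℕ}

def LevelsAdj (s r : Fin (t + 1)) : Prop :=
  (s.val = 0 ∧ r.val = 0) ∨ s.val + 1 = r.val ∨ r.val + 1 = s.val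

theorem adj_some_some {s r : Fin (t + 1)} {i k : V} :
    (Mycielskian G t).Adj (some (s, i)) (some (r, k)) ↔ G.Adj i k ∧ LevelsAdj s r :=
  Iff.rfl

theorem exists_levelsAdj (s : Fin (t + 1)) : ∃ r : Fin (t + 1), LevelsAdj s r := by
  rcases Nat.eq_zero_or_pos s.val with hs | hs
  · exact ⟨0, Or.inl ⟨hs, rfl⟩⟩
  · exact ⟨⟨s.val - 1, by omega⟩, Or.inr (Or.inr (Nat.sub_add_cancel hs))⟩

theorem neighborSet_some_eq_of_neighborSet_eq {i j : V}
    (h : G.neighborSet i = G.neighborSet j) (s : Fin (t + 1)) :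
    (Mycielskian G t).neighborSet (some (s, i)) =
      (Mycielskian G t).neighborSet (some (s, j)) := by
  ext (_ | ⟨r, k⟩)
  · exact Iff.rfl
  · exact and_congr_left' (Set.ext_iff.mp h k)

/-- Every level has a neighbouring level, so adjacency in `G` can be read off at any level. -/
theorem neighborSet_eq_of_neighborSet_some_eq {i j : V} {s : Fin (t + 1)}
    (h : (Mycielskian G t).neighborSet (some (s, i)) =
      (Mycielskian G t).neighborSet (some (s, j))) :
    G.neighborSet i = G.neighborSet j := by
  obtain ⟨r, hr⟩ := exists_levelsAdj s
  ext k
  simpa only [mem_neighborSet, adj_some_some, and_iff_left hr] using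
    Set.ext_iff.mp h (some (r, k))

end Mycielskian

theorem mycielskian_twins_general {V : Type*} (G : SimpleGraph V) (t : ℕ)
    (i j : V) :
    (G.neighborSet i = G.neighborSet j → ∀ s : Fin (t + 1),
      (Mycielskian G t).neighborSet (some (s, i)) =
        (Mycielskian G t).neighborSet (some (s, j))) ∧
    ((∃ s : Fin (t + 1),
        (Mycielskian G t).neighborSet (some (s, i)) =
          (Mycielskian G t).neighborSet (some (s, j))) →
      G.neighborSet i = G.neighborSet j) :=
  ⟨Mycielskian.neighborSet_some_eq_of_neighborSet_eq,
    fun ⟨_, h⟩ => Mycielskian.neighborSet_eq_of_neighborSet_some_eq h⟩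

/-- twins in `G` give twins at every level of `μ_t(G)`, and twins
at some level of `μ_t(G)` come from twins in `G`. -/
theorem mycielskian_twins {V : Type*} (G : SimpleGraph V) (t : ℕ) (ht : 1 ≤ t)
    (i j : V) :
    (G.neighborSet i = G.neighborSet j → ∀ s : Fin (t + 1),
      (Mycielskian G t).neighborSet (some (s, i)) =
        (Mycielskian G t).neighborSet (some (s, j))) ∧
    ((∃ s : Fin (t + 1),
        (Mycielskian G t).neighborSet (some (s, i)) =
          (Mycielskian G t).neighborSet (some (s, j))) →
      G.neighborSet i = G.neighborSet j) :=
  mycielskian_twins_general G t i j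
end

section
/- If S is a determining set for a graph G, then the set S̃ = {[x] : x ∈ S} of twin equivalence classes is a determining set for the quotient graph G̃. -/
open SimpleGraph

/-!
An automorphism `ψ` of the twin quotient that fixes the image of `S` can only move singleton
classes: if it moved the class of two distinct twins `x, y`, the transposition `(x y)`, which
is an automorphism of `G`, would fix `S` pointwise. Hence `ψ` lifts to an automorphism of `G`
that is the identity on every `ψ`-fixed class, in particular on `S`; since `S` is determining,
the lift is the identity, and therefore so is `ψ`.
-/

namespace Quotient

variable {α : Type*} {s : Setoid α}

theorem mk_swap_apply [DecidableEq α] {x y : α} (hxy : Quotient.mk s x = Quotient.mk s y)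
    (v : α) : Quotient.mk s (Equiv.swap x y v) = Quotient.mk s v := by
  rcases eq_or_ne v x with rfl | hvx
  · rw [Equiv.swap_apply_left, hxy]
  rcases eq_or_ne v y with rfl | hvy
  · rw [Equiv.swap_apply_right, hxy]
  · rw [Equiv.swap_apply_of_ne_of_ne hvx hvy]

def MovesOnlySingletons (e : Equiv.Perm (Quotient s)) : Prop :=
  ∀ x y : α, Quotient.mk s x = Quotient.mk s y →
    e (Quotient.mk s x) ≠ Quotient.mk s x → x = y

theorem MovesOnlySingletons.symm {e : Equiv.Perm (Quotient s)} (he : MovesOnlySingletons e) :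
    MovesOnlySingletons e.symm := fun x y hxy hmoved =>
  he x y hxy fun hfixed => hmoved (e.symm_apply_eq.mpr hfixed.symm)

open Classical in
/-- When `e` moves only singletons, `(e ⟦v⟧).out` is the only choice in the second branch. -/
noncomputable def permLiftFun (e : Equiv.Perm (Quotient s)) (v : α) : α :=
  if e (Quotient.mk s v) = Quotient.mk s v then v else (e (Quotient.mk s v)).out

theorem mk_permLiftFun (e : Equiv.Perm (Quotient s)) (v : α) :
    Quotient.mk s (permLiftFun e v) = e (Quotient.mk s v) := by
  unfold permLiftFun
  split_ifs with h
  · exact h.symm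
  · exact out_eq _

theorem permLiftFun_of_apply_mk_eq (e : Equiv.Perm (Quotient s)) {v : α}
    (h : e (Quotient.mk s v) = Quotient.mk s v) : permLiftFun e v = v :=
  if_pos h

theorem permLiftFun_symm_permLiftFun {e : Equiv.Perm (Quotient s)}
    (he : MovesOnlySingletons e) (v : α) : permLiftFun e.symm (permLiftFun e v) = v := by
  by_cases hfixed : e (Quotient.mk s v) = Quotient.mk s v
  · rw [permLiftFun_of_apply_mk_eq e hfixed,
      permLiftFun_of_apply_mk_eq e.symm (e.symm_apply_eq.mpr hfixed.symm)]
  · refine (he v _ ?_ hfixed).symm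
    rw [mk_permLiftFun, mk_permLiftFun, Equiv.symm_apply_apply]

noncomputable def liftPerm {e : Equiv.Perm (Quotient s)} (he : MovesOnlySingletons e) :
    Equiv.Perm α where
  toFun := permLiftFun e
  invFun := permLiftFun e.symm
  left_inv := permLiftFun_symm_permLiftFun he
  right_inv := permLiftFun_symm_permLiftFun he.symm

end Quotient

section TwinQuotient

variable {V : Type*} {G : SimpleGraph V}

theorem twinQuotient_adj_mk_mk {x y : V} :
    (twinQuotient G).Adj (Quotient.mk (twinSetoid G) x) (Quotient.mk (twinSetoid G) y) ↔
      G.Adj x y := by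
  refine ⟨?_, fun h => ⟨x, y, rfl, rfl, h⟩⟩
  rintro ⟨p, q, hp, hq, hpq⟩
  have hp : G.neighborSet p = G.neighborSet x := Quotient.exact hp
  have hq : G.neighborSet q = G.neighborSet y := Quotient.exact hq
  have hxq : q ∈ G.neighborSet x := hp ▸ hpq
  exact G.adj_symm (hq ▸ G.adj_symm hxq : x ∈ G.neighborSet y)

def isoOfCoversTwinQuotient (ψ : twinQuotient G ≃g twinQuotient G) (f : Equiv.Perm V)
    (hf : ∀ v, Quotient.mk (twinSetoid G) (f v) = ψ (Quotient.mk (twinSetoid G) v)) :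
    G ≃g G where
  toEquiv := f
  map_rel_iff' {u w} := by
    rw [← twinQuotient_adj_mk_mk (G := G), ← twinQuotient_adj_mk_mk (G := G), hf, hf]
    exact ψ.map_rel_iff

theorem IsDetermining.eq_of_mk_eq_of_mk_notMem_image {S : Set V} (hS : IsDetermining G S)
    {x y : V} (hxy : Quotient.mk (twinSetoid G) x = Quotient.mk (twinSetoid G) y)
    (hx : Quotient.mk (twinSetoid G) x ∉ Quotient.mk (twinSetoid G) '' S) : x = y := by
  classical
  let σ := isoOfCoversTwinQuotient .refl (Equiv.swap x y) (Quotient.mk_swap_apply hxy)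
  have hσS : ∀ v ∈ S, σ v = v := by
    intro v hv
    have hvx : Quotient.mk (twinSetoid G) v ≠ Quotient.mk (twinSetoid G) x :=
      fun h => hx ⟨v, hv, h⟩
    exact Equiv.swap_apply_of_ne_of_ne (by rintro rfl; exact hvx rfl)
      (by rintro rfl; exact hvx hxy.symm)
  exact (hS σ hσS x).symm.trans (Equiv.swap_apply_left x y)

end TwinQuotient

/-- the image of a determining set in the twin quotient is a
determining set for the quotient graph. -/
theorem twinQuotient_determining {V : Type*} (G : SimpleGraph V) (S : Set V)
    (hS : IsDetermining G S) :
    IsDetermining (twinQuotient G) (Quotient.mk (twinSetoid G) '' S) := by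
  intro ψ hψS
  have hsingle : Quotient.MovesOnlySingletons ψ.toEquiv := fun x y hxy hmoved =>
    hS.eq_of_mk_eq_of_mk_notMem_image hxy fun hx => hmoved (hψS _ hx)
  let φ := isoOfCoversTwinQuotient ψ (Quotient.liftPerm hsingle)
    (Quotient.mk_permLiftFun ψ.toEquiv)
  have hφ : ∀ v, φ v = v := hS φ fun v hv =>
    Quotient.permLiftFun_of_apply_mk_eq ψ.toEquiv (hψS _ ⟨v, hv, rfl⟩)
  intro a
  induction a using Quotient.ind with
  | _ v => exact (Quotient.mk_permLiftFun ψ.toEquiv v).symm.trans (congrArg _ (hφ v))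
end

section
/- Every determining set of a graph G contains all but at most one vertex from each equivalence class of mutually twin vertices; consequently every minimum twin cover has size |V(G)| − |V(G̃)|, and det(G) ≥ |V(G)| − |V(G̃)|. -/
/-! Transposing two twins is an automorphism fixing every other vertex, so a determining set
meets every pair of distinct twins, i.e. it is a twin cover. A set is a twin cover exactly when
its complement meets each twin class at most once; hence every twin cover has at least
`|V| - |V(G̃)|` vertices, and deleting one representative of each class attains this bound. -/

open SimpleGraph

def SimpleGraph.Iso.swapOfNeighborSetEq {V : Type*} [DecidableEq V] {G : SimpleGraph V}
    {x y : V} (h : G.neighborSet x = G.neighborSet y) : G ≃g G where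
  toEquiv := Equiv.swap x y
  map_rel_iff' {a b} := by
    have hadj : ∀ z, G.Adj x z ↔ G.Adj y z := fun z => Set.ext_iff.mp h z
    have hadj' : ∀ z, G.Adj z x ↔ G.Adj z y := fun z => by
      rw [adj_comm, hadj, adj_comm]
    simp only [Equiv.swap_apply_def]
    split_ifs <;> subst_vars <;> simp [hadj, hadj']

section Twins

variable {V : Type*} {G : SimpleGraph V}

theorem IsDetermining.isTwinCover {S : Set V} (hS : IsDetermining G S) : IsTwinCover G S := by
  classical
  intro x y hne h
  by_contra! hxy
  have hfix : ∀ v ∈ S, Iso.swapOfNeighborSetEq h v = v := fun v hv =>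
    Equiv.swap_apply_of_ne_of_ne (by rintro rfl; exact hxy.1 hv) (by rintro rfl; exact hxy.2 hv)
  have hx : Equiv.swap x y x = x := hS _ hfix x
  exact hne (by rwa [Equiv.swap_apply_left, eq_comm] at hx)

theorem isTwinCover_iff_injOn_compl {T : Set V} :
    IsTwinCover G T ↔ Set.InjOn (Quotient.mk (twinSetoid G)) Tᶜ := by
  refine ⟨fun hT a ha b hb hab => ?_, fun hinj x y hne h => ?_⟩
  · by_contra hne
    exact (hT a b hne (Quotient.exact hab)).elim ha hb
  · by_contra! hxy
    exact hne (hinj hxy.1 hxy.2 (Quotient.sound h))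

theorem IsTwinCover.card_sub_le_ncard [Finite V] {T : Set V} (hT : IsTwinCover G T) :
    Nat.card V - Nat.card (Quotient (twinSetoid G)) ≤ T.ncard := by
  have hcompl : Tᶜ.ncard ≤ Nat.card (Quotient (twinSetoid G)) := by
    rw [← (isTwinCover_iff_injOn_compl.1 hT).ncard_image]
    exact Set.ncard_le_card _
  have := Set.ncard_add_ncard_compl T
  omega

theorem exists_isTwinCover_ncard_eq [Finite V] :
    ∃ T : Set V, IsTwinCover G T ∧
      T.ncard = Nat.card V - Nat.card (Quotient (twinSetoid G)) := by
  set R := Set.range (Quotient.out : Quotient (twinSetoid G) → V)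
  refine ⟨Rᶜ, isTwinCover_iff_injOn_compl.2 ?_, ?_⟩
  · rw [compl_compl]
    rintro _ ⟨a, rfl⟩ _ ⟨b, rfl⟩ hab
    simpa using hab
  · have hR : R.ncard = Nat.card (Quotient (twinSetoid G)) := by
      rw [← Nat.card_coe_set_eq, Nat.card_range_of_injective Quotient.out_injective]
    have := Set.ncard_add_ncard_compl R
    omega

theorem IsMinTwinCover.ncard_eq [Finite V] {T : Set V} (hT : IsMinTwinCover G T) :
    T.ncard = Nat.card V - Nat.card (Quotient (twinSetoid G)) := by
  obtain ⟨T₀, hT₀, hcard⟩ := exists_isTwinCover_ncard_eq (G := G)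
  exact le_antisymm (hcard ▸ hT.2 T₀ hT₀) hT.1.card_sub_le_ncard

theorem exists_isDetermining_card_eq_detNum [Fintype V] :
    ∃ S : Finset V, S.card = detNum G ∧ IsDetermining G S := by
  have huniv : Fintype.card V ∈ {n | ∃ S : Finset V, S.card = n ∧ IsDetermining G S} :=
    ⟨Finset.univ, rfl, fun _ h v => h v (Finset.mem_univ v)⟩
  exact Nat.sInf_mem ⟨_, huniv⟩

end Twins

/-- determining sets contain all but at most one vertex of each
twin class; minimum twin covers have size `|V(G)| − |V(G̃)|`; and
`det(G) ≥ |V(G)| − |V(G̃)|`. -/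
theorem det_ge_twin_cover {V : Type*} [Fintype V] (G : SimpleGraph V) :
    (∀ S : Set V, IsDetermining G S → ∀ x y : V, x ≠ y →
        G.neighborSet x = G.neighborSet y → x ∈ S ∨ y ∈ S) ∧
    (∀ T : Set V, IsMinTwinCover G T →
        T.ncard = Fintype.card V - Nat.card (Quotient (twinSetoid G))) ∧
    Fintype.card V - Nat.card (Quotient (twinSetoid G)) ≤ detNum G := by
  rw [← Nat.card_eq_fintype_card]
  refine ⟨fun S hS => hS.isTwinCover, fun T hT => hT.ncard_eq, ?_⟩
  obtain ⟨S, hcard, hS⟩ := exists_isDetermining_card_eq_detNum (G := G)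
  simpa only [Set.ncard_coe_finset, hcard] using hS.isTwinCover.card_sub_le_ncard
end
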